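/- For each fixed integer m ≥ 1, δ(m,n) → 0 as n → ∞; consequently π − arccos(δ(m,n)) → π/2 as n → ∞. -/

import Mathlib

open Metric RealInnerProductSpace

/-- `BorsukSet m n` is the set of real numbers `δ ∈ (0, 1]` with the property that for
every continuous odd map `f : S^{n-1} → ℝ^{m+n-1}` there is a finite subset `X` of the
sphere `S^{n-1}` of cardinality at most `m+n` and geodesic diameter at most
`π - arccos δ` such that `0` lies in the convex hull of `f(X)`.  The number `δ(m,n)` of
the paper is the least element of this set. -/
def BorsukSet (m n : ℕ) : Set ℝ :=
  {δ : ℝ | δ ∈ Set.Ioc (0 : ℝ) 1 ∧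
    ∀ f : EuclideanSpace ℝ (Fin n) → EuclideanSpace ℝ (Fin (m + n - 1)),
      ContinuousOn f (sphere 0 1) →
      (∀ v ∈ sphere (0 : EuclideanSpace ℝ (Fin n)) 1, f (-v) = -f v) →
      ∃ X : Finset (EuclideanSpace ℝ (Fin n)),
        ↑X ⊆ sphere (0 : EuclideanSpace ℝ (Fin n)) 1 ∧
        X.card ≤ m + n ∧
        (∀ x ∈ X, ∀ y ∈ X, Real.arccos ⟪x, y⟫ ≤ Real.pi - Real.arccos δ) ∧
        (0 : EuclideanSpace ℝ (Fin (m + n - 1))) ∈ convexHull ℝ (f '' ↑X)}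

/-!
Any `m + n` vectors in `ℝ^(m+n-1)` are linearly dependent, and a vanishing linear combination of
the images of `m + n` points becomes one with nonnegative weights after replacing some points `v`
by `-v` (allowed since `f` is odd), so `0` lies in the convex hull of the images. Hence only the
diameter matters: it suffices to find `m + n` unit vectors in `ℝⁿ` whose pairwise inner products
have absolute value at most `δ`. The `n` standard basis vectors together with the normalized
indicator vectors of `m` disjoint blocks of `b = ⌊n / (m + 1)⌋` coordinates do this with
`δ = 1 / √b`, which tends to `0`.
-/

open Finset Topology

noncomputable section

variable {ι : Type*} [Fintype ι] [DecidableEq ι]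

def blockVector (s : Finset ι) : EuclideanSpace ℝ ι :=
  WithLp.toLp 2 fun i => if i ∈ s then (√(#s : ℝ))⁻¹ else 0

theorem inner_blockVector (s t : Finset ι) :
    ⟪blockVector s, blockVector t⟫ = #(s ∩ t) * ((√(#s : ℝ))⁻¹ * (√(#t : ℝ))⁻¹) := by
  simp only [blockVector, PiLp.inner_apply, RCLike.inner_apply, conj_trivial]
  simp only [ite_mul, mul_ite, zero_mul, mul_zero, ← ite_and]
  rw [← sum_filter]
  simp [filter_and, mul_comm]

theorem norm_blockVector {s : Finset ι} (hs : s.Nonempty) : ‖blockVector s‖ = 1 := by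
  have hpos : (0 : ℝ) < #s := by exact_mod_cast hs.card_pos
  have h := inner_blockVector s s
  rw [real_inner_self_eq_norm_sq, inter_self, ← mul_inv, Real.mul_self_sqrt hpos.le,
    mul_inv_cancel₀ hpos.ne'] at h
  exact (pow_eq_one_iff_of_nonneg (norm_nonneg _) two_ne_zero).mp h

theorem abs_inner_single_blockVector_le (i : ι) (s : Finset ι) :
    |⟪EuclideanSpace.single i (1 : ℝ), blockVector s⟫| ≤ (√(#s : ℝ))⁻¹ := by
  rw [EuclideanSpace.inner_single_left]
  simp only [blockVector, map_one, one_mul]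
  split_ifs <;> simp [abs_of_nonneg]

theorem inner_blockVector_of_disjoint {s t : Finset ι} (h : Disjoint s t) :
    ⟪blockVector s, blockVector t⟫ = 0 := by
  simp [inner_blockVector, disjoint_iff_inter_eq_empty.mp h]

variable {κ : Type*}

def basisWithBlockVectors (blocks : κ → Finset ι) : ι ⊕ κ → EuclideanSpace ℝ ι :=
  Sum.elim (fun i => EuclideanSpace.single i 1) (fun k => blockVector (blocks k))

theorem norm_basisWithBlockVectors {blocks : κ → Finset ι} (hne : ∀ k, (blocks k).Nonempty) :
    ∀ z, ‖basisWithBlockVectors blocks z‖ = 1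
  | .inl _ => by simp [basisWithBlockVectors]
  | .inr k => norm_blockVector (hne k)

theorem pairwise_abs_inner_basisWithBlockVectors_le {blocks : κ → Finset ι} {b : ℕ}
    (hdisj : Pairwise (Function.onFun Disjoint blocks)) (hcard : ∀ k, #(blocks k) = b) :
    Pairwise fun z z' =>
      |⟪basisWithBlockVectors blocks z, basisWithBlockVectors blocks z'⟫| ≤ (√(b : ℝ))⁻¹ := by
  rintro (i | k) (i' | k') hne <;> simp only [basisWithBlockVectors, Sum.elim_inl, Sum.elim_inr]
  · have hii : i' ≠ i := fun h => hne (congrArg _ h.symm)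
    simp [EuclideanSpace.inner_single_left, hii]
  · simpa [hcard] using abs_inner_single_blockVector_le i (blocks k')
  · simpa [real_inner_comm, hcard] using abs_inner_single_blockVector_le i' (blocks k)
  · rw [inner_blockVector_of_disjoint (hdisj fun h => hne (congrArg _ h))]
    simp

end

def finBlocks {m b n : ℕ} (h : m * b ≤ n) (k : Fin m) : Finset (Fin n) :=
  univ.map ((Function.Embedding.sectR k (Fin b)).trans
    (finProdFinEquiv.toEmbedding.trans (Fin.castLEEmb h)))

theorem card_finBlocks {m b n : ℕ} (h : m * b ≤ n) (k : Fin m) : #(finBlocks h k) = b := by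
  simp [finBlocks]

theorem pairwise_disjoint_finBlocks {m b n : ℕ} (h : m * b ≤ n) :
    Pairwise (Function.onFun Disjoint (finBlocks h)) := by
  intro k k' hne
  simp only [Function.onFun, finBlocks, Finset.disjoint_left, Finset.mem_map]
  rintro _ ⟨j, -, rfl⟩ ⟨j', -, hjj'⟩
  simp only [Function.Embedding.trans_apply, EmbeddingLike.apply_eq_iff_eq,
    Function.Embedding.sectR_apply, Prod.mk.injEq] at hjj'
  exact hne hjj'.1.symm

theorem exists_sign_zero_mem_convexHull {E ι : Type*} [AddCommGroup E] [Module ℝ E] [Fintype ι]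
    {v : ι → E} (hv : ¬LinearIndependent ℝ v) :
    ∃ σ : ι → ℝ, (∀ i, σ i = 1 ∨ σ i = -1) ∧
      (0 : E) ∈ convexHull ℝ (Set.range fun i => σ i • v i) := by
  obtain ⟨g, hg, i₀, hi₀⟩ := Fintype.not_linearIndependent_iff.mp hv
  set σ : ι → ℝ := fun i => if g i < 0 then -1 else 1
  have hσ : ∀ i, |g i| * σ i = g i := fun i => by
    by_cases h : g i < 0
    · simp [σ, h, abs_of_neg h]
    · simp [σ, h, abs_of_nonneg (not_lt.mp h)]
  have hw : 0 < ∑ i, |g i| :=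
    sum_pos' (fun i _ => abs_nonneg _) ⟨i₀, mem_univ _, abs_pos.mpr hi₀⟩
  have hmass := univ.centerMass_mem_convexHull (fun i _ => abs_nonneg (g i)) hw
    (z := fun i => σ i • v i) (s := Set.range fun i => σ i • v i) fun i _ => ⟨i, rfl⟩
  refine ⟨σ, fun i => by by_cases h : g i < 0 <;> simp [σ, h], ?_⟩
  simpa only [centerMass, smul_smul, hσ, hg, smul_zero] using hmass

theorem mem_borsukSet_of_pairwise_abs_inner_le {m n : ℕ} {ι : Type*} [Fintype ι]
    (hcard_lt : m + n - 1 < Fintype.card ι) (hcard_le : Fintype.card ι ≤ m + n)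
    {P : ι → EuclideanSpace ℝ (Fin n)} (hP : ∀ i, ‖P i‖ = 1) {δ : ℝ} (hδ : δ ∈ Set.Ioc 0 1)
    (hPδ : Pairwise fun i j => |⟪P i, P j⟫| ≤ δ) : δ ∈ BorsukSet m n := by
  classical
  refine ⟨hδ, fun f _ hodd => ?_⟩
  have hdep : ¬LinearIndependent ℝ (f ∘ P) := fun h => by
    have := h.fintype_card_le_finrank
    rw [finrank_euclideanSpace_fin] at this
    omega
  obtain ⟨σ, hσ, h0⟩ := exists_sign_zero_mem_convexHull hdep
  have hσ_abs : ∀ i, |σ i| = 1 := fun i => by rcases hσ i with h | h <;> simp [h]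
  set Q : ι → EuclideanSpace ℝ (Fin n) := fun i => σ i • P i
  have hQ : ∀ i, Q i ∈ sphere 0 1 := fun i => by simp [Q, norm_smul, hσ_abs, hP]
  have hfQ : ∀ i, f (Q i) = σ i • f (P i) := fun i => by
    rcases hσ i with h | h
    · simp [Q, h]
    · simp [Q, h, hodd (P i) (by simp [hP])]
  have hQδ : ∀ i j, -δ ≤ ⟪Q i, Q j⟫ := fun i j => by
    rcases eq_or_ne i j with rfl | hij
    · rw [real_inner_self_eq_norm_sq, mem_sphere_zero_iff_norm.mp (hQ i), one_pow]
      linarith [hδ.1]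
    · have : |⟪Q i, Q j⟫| = |⟪P i, P j⟫| := by
        simp [Q, real_inner_smul_left, real_inner_smul_right, abs_mul, hσ_abs]
      exact (neg_le_neg (this ▸ hPδ hij)).trans (neg_abs_le _)
  refine ⟨univ.image Q, ?_, ?_, ?_, ?_⟩
  · simpa [Set.range_subset_iff] using hQ
  · exact card_image_le.trans (by simpa using hcard_le)
  · simp only [mem_image, mem_univ, true_and, forall_exists_index, forall_apply_eq_imp_iff]
    intro i j
    rw [← Real.arccos_neg]
    exact Real.arccos_le_arccos (hQδ i j)
  · convert h0 using 2
    ext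
    simp [hfQ]

theorem inv_sqrt_mem_borsukSet {m n b : ℕ} (hn : 0 < n) (hb : 0 < b) (h : m * b ≤ n) :
    (√(b : ℝ))⁻¹ ∈ BorsukSet m n := by
  have hsqrt : 1 ≤ √(b : ℝ) := Real.one_le_sqrt.mpr (by exact_mod_cast hb)
  refine mem_borsukSet_of_pairwise_abs_inner_le (P := basisWithBlockVectors (finBlocks h))
    (by simp only [Fintype.card_sum, Fintype.card_fin]; omega) (by simp [add_comm])
    (norm_basisWithBlockVectors fun k => ?_) ⟨by positivity, inv_le_one_of_one_le₀ hsqrt⟩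
    (pairwise_abs_inner_basisWithBlockVectors_le (pairwise_disjoint_finBlocks h)
      (card_finBlocks h))
  rw [← card_pos, card_finBlocks]
  exact hb

theorem stmt17 (m : ℕ) (d : ℕ → ℝ)
    (hd : ∀ n, 1 < n → IsLeast (BorsukSet m n) (d n)) :
    Filter.Tendsto d Filter.atTop (nhds 0) ∧
    Filter.Tendsto (fun n => Real.pi - Real.arccos (d n)) Filter.atTop
      (nhds (Real.pi / 2)) := by
  have hupper : Filter.Tendsto (fun n : ℕ => (√((n / (m + 1) : ℕ) : ℝ))⁻¹) Filter.atTop (𝓝 0) :=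
    tendsto_inv_atTop_zero.comp <| Real.tendsto_sqrt_atTop.comp <|
      tendsto_natCast_atTop_atTop.comp (Nat.tendsto_div_const_atTop m.succ_ne_zero)
  have hd0 : Filter.Tendsto d Filter.atTop (𝓝 0) := by
    refine tendsto_of_tendsto_of_tendsto_of_le_of_le' tendsto_const_nhds hupper ?_ ?_
    · filter_upwards [Filter.eventually_gt_atTop 1] with n hn
      exact (hd n hn).1.1.1.le
    · filter_upwards [Filter.eventually_gt_atTop (m + 1)] with n hn
      refine (hd n (by omega)).2 (inv_sqrt_mem_borsukSet (by omega) (Nat.div_pos ?_ m.succ_pos) ?_)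
      · omega
      · calc m * (n / (m + 1)) ≤ (m + 1) * (n / (m + 1)) := by gcongr; omega
          _ ≤ n := Nat.mul_div_le n (m + 1)
  refine ⟨hd0, ?_⟩
  simpa [Real.arccos_zero, sub_half] using
    (tendsto_const_nhds (x := Real.pi)).sub ((Real.continuous_arccos.tendsto 0).comp hd0)
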